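/- Lamperti's theorem: a process (X_t)_{t>0} satisfies the scaling property of order h (for all α > 0, (X_{αt})_{t>0} equals in law (α^h X_t)_{t>0}) if and only if the process (e^{−hy} X_{e^y})_{y∈ℝ} is strictly stationary. -/

import Mathlib

open MeasureTheory ProbabilityTheory

/-! Write `Y_y = e^{-hy} X_{e^y}`. Multiplying the `i`-th coordinate by `e^{h (y_i + c)}` carries
the law of `(Y_{y_i + c})_i` to that of `(X_{e^c e^{y_i}})_i` and the law of `(Y_{y_i})_i` to that
of `((e^c)^h X_{e^{y_i}})_i`. This map is a measurable automorphism of `ℝ^k`, so shift invariance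
at `(c, y)` is equivalent to the scaling property at `(e^c, e^y)`, and `exp` maps `ℝ` onto
`(0, ∞)`. -/

/-- Equality of all finite-dimensional distributions at nonnegative times for
real-valued processes indexed by `ℝ`. -/
def SameFDD {Ω Ω' : Type} [MeasurableSpace Ω] [MeasurableSpace Ω']
    (P : Measure Ω) (P' : Measure Ω') (X : ℝ → Ω → ℝ) (Y : ℝ → Ω' → ℝ) : Prop :=
  ∀ (k : ℕ) (t : Fin k → ℝ), (∀ i, 0 ≤ t i) →
    P.map (fun ω i => X (t i) ω) = P'.map (fun ω i => Y (t i) ω)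

/-- A process `X` (indexed by `t ≥ 0`) is IDT if, for every `n ∈ ℕ*`,
`(X_{nt})_{t ≥ 0}` has the same finite-dimensional distributions as the sum of
`n` independent copies of `X`. -/
def IsIDT {Ω : Type} [MeasurableSpace Ω] (P : Measure Ω) (X : ℝ → Ω → ℝ) : Prop :=
  ∀ n : ℕ, 0 < n →
    ∀ (Ω' : Type) (_ : MeasurableSpace Ω') (P' : Measure Ω') (Y : Fin n → ℝ → Ω' → ℝ),
      IsProbabilityMeasure P' →
      iIndepFun (m := fun _ => MeasurableSpace.pi) (fun i ω t => Y i t ω) P' →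
      (∀ i, SameFDD P P' X (Y i)) →
      SameFDD P P' (fun t ω => X (n * t) ω) (fun t ω => ∑ i, Y i t ω)


/-- A real-indexed process is strictly stationary if all its finite-dimensional
distributions are invariant under time shifts. -/
def IsStrictlyStationary {Ω : Type} [MeasurableSpace Ω] (P : Measure Ω)
    (Y : ℝ → Ω → ℝ) : Prop :=
  ∀ (h : ℝ) (k : ℕ) (y : Fin k → ℝ),
    P.map (fun ω i => Y (y i + h) ω) = P.map (fun ω i => Y (y i) ω)

namespace MeasurableEmbedding

variable {Ω Ω' α β : Type*} [MeasurableSpace Ω] [MeasurableSpace Ω'] [MeasurableSpace α]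
  [MeasurableSpace β] {e : α → β}

theorem map_comp (he : MeasurableEmbedding e) (μ : Measure Ω) (f : Ω → α) :
    μ.map (e ∘ f) = (μ.map f).map e := by
  by_cases hf : AEMeasurable f μ
  · exact (AEMeasurable.map_map_of_aemeasurable he.measurable.aemeasurable hf).symm
  · rw [Measure.map_of_not_aemeasurable hf, Measure.map_zero,
      Measure.map_of_not_aemeasurable (he.aemeasurable_comp_iff.not.mpr hf)]

theorem map_comp_eq_map_comp_iff (he : MeasurableEmbedding e) (μ : Measure Ω)
    (μ' : Measure Ω') (f : Ω → α) (g : Ω' → α) :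
    μ.map (e ∘ f) = μ'.map (e ∘ g) ↔ μ.map f = μ'.map g := by
  rw [he.map_comp, he.map_comp]
  refine ⟨fun H => ?_, fun H => H ▸ rfl⟩
  simpa only [he.comap_map] using congrArg (Measure.comap e) H

end MeasurableEmbedding

theorem MeasureTheory.Measure.map_mul_left_eq_map_mul_left_iff {Ω Ω' ι G₀ : Type*} [MeasurableSpace Ω]
    [MeasurableSpace Ω'] [GroupWithZero G₀] [MeasurableSpace G₀] [MeasurableMul G₀]
    (μ : Measure Ω) (μ' : Measure Ω') {a : ι → G₀} (ha : ∀ i, a i ≠ 0)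
    (f : Ω → ι → G₀) (g : Ω' → ι → G₀) :
    μ.map (fun ω i => a i * f ω i) = μ'.map (fun ω i => a i * g ω i) ↔
      μ.map f = μ'.map g :=
  (MeasurableEquiv.piCongrRight fun i => MeasurableEquiv.mulLeft₀ (a i) (ha i)).measurableEmbedding
    |>.map_comp_eq_map_comp_iff μ μ' f g

open Real in
theorem map_shift_eq_iff_map_scale_eq {Ω : Type*} [MeasurableSpace Ω] (P : Measure Ω)
    (X : ℝ → Ω → ℝ) (h c : ℝ) {k : ℕ} (y : Fin k → ℝ) :
    P.map (fun ω i => exp (-(h * (y i + c))) * X (exp (y i + c)) ω) =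
        P.map (fun ω i => exp (-(h * y i)) * X (exp (y i)) ω) ↔
      P.map (fun ω i => X (exp c * exp (y i)) ω) =
        P.map (fun ω i => exp c ^ h * X (exp (y i)) ω) := by
  rw [← Measure.map_mul_left_eq_map_mul_left_iff P P (a := fun i => exp (h * (y i + c)))
    fun i => (exp_pos _).ne']
  congr! 2 <;> funext ω i
  · rw [← mul_assoc, ← exp_add, add_neg_cancel, exp_zero, one_mul, exp_add, mul_comm]
  · rw [← mul_assoc, ← exp_add, rpow_def_of_pos (exp_pos c), log_exp]
    ring_nf

theorem lamperti_selfsimilar_iff_stationary_general {Ω : Type} [MeasurableSpace Ω]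
    (P : Measure Ω) (X : ℝ → Ω → ℝ) (h : ℝ) :
    (∀ α : ℝ, 0 < α → ∀ (k : ℕ) (t : Fin k → ℝ), (∀ i, 0 < t i) →
        P.map (fun ω i => X (α * t i) ω) =
          P.map (fun ω i => α ^ h * X (t i) ω)) ↔
      IsStrictlyStationary P (fun y ω => Real.exp (-(h * y)) * X (Real.exp y) ω) := by
  constructor
  · intro hscale c k y
    exact (map_shift_eq_iff_map_scale_eq P X h c y).mpr
      (hscale _ (Real.exp_pos c) k _ fun i => Real.exp_pos (y i))
  · intro hstat α hα k t ht
    obtain ⟨c, rfl⟩ : ∃ c, Real.exp c = α := ⟨Real.log α, Real.exp_log hα⟩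
    obtain ⟨y, rfl⟩ : ∃ y : Fin k → ℝ, (fun i => Real.exp (y i)) = t :=
      ⟨fun i => Real.log (t i), funext fun i => Real.exp_log (ht i)⟩
    exact (map_shift_eq_iff_map_scale_eq P X h c y).mp (hstat c k y)

/-- **Lamperti.** A process `(X_t)_{t>0}` is self-similar of order
`h` iff `(e^{-hy} X_{e^y})_{y ∈ ℝ}` is strictly stationary. -/
theorem lamperti_selfsimilar_iff_stationary {Ω : Type} [MeasurableSpace Ω]
    (P : Measure Ω) [IsProbabilityMeasure P] (X : ℝ → Ω → ℝ) (h : ℝ) :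
    (∀ α : ℝ, 0 < α → ∀ (k : ℕ) (t : Fin k → ℝ), (∀ i, 0 < t i) →
        P.map (fun ω i => X (α * t i) ω) =
          P.map (fun ω i => α ^ h * X (t i) ω)) ↔
      IsStrictlyStationary P (fun y ω => Real.exp (-(h * y)) * X (Real.exp y) ω) :=
  lamperti_selfsimilar_iff_stationary_general P X h
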